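/- Let p be an odd prime and G a finite p-group such that G/η(G) is powerful. Then G/η(G) is elementary abelian (abelian of exponent dividing p). -/

import Mathlib

/-- The subgroup generated by `p`-th powers of elements of `N`. -/
def pPow {G : Type*} [Group G] (p : ℕ) (N : Subgroup G) : Subgroup G :=
  Subgroup.closure ((fun x => x ^ p) '' (N : Set G))

theorem pPow_normal {G : Type*} [Group G] (p : ℕ) {N : Subgroup G} (hN : N.Normal) :
    (pPow p N).Normal := by
  constructor
  intro x hx g
  have h : pPow p N ≤ Subgroup.comap (MulAut.conj g).toMonoidHom (pPow p N) := by
    rw [pPow, Subgroup.closure_le]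
    rintro - ⟨n, hn, rfl⟩
    have : (MulAut.conj g) (n ^ p) = (g * n * g⁻¹) ^ p := by
      simp [MulAut.conj_apply, conj_pow]
    refine Subgroup.mem_comap.2 ?_
    show (MulAut.conj g) (n ^ p) ∈ _
    rw [this]
    exact Subgroup.subset_closure ⟨g * n * g⁻¹, hN.conj_mem n hn g, rfl⟩
  simpa using h hx

theorem normal_sSup {G : Type*} [Group G] {S : Set (Subgroup G)}
    (hS : ∀ N ∈ S, N.Normal) : (sSup S).Normal := by
  constructor
  intro x hx g
  have h : sSup S ≤ Subgroup.comap (MulAut.conj g).toMonoidHom (sSup S) := by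
    refine sSup_le fun N hN => le_trans ?_ (Subgroup.comap_mono (le_sSup hN))
    intro n hn
    exact Subgroup.mem_comap.2 (by simpa using (hS N hN).conj_mem n hn g)
  simpa using h hx

/-- The upper η-series: `η₀ = 1`, and `η_{i+1}/η_i = η(G/η_i)` is the product of all
powerfully embedded subgroups of `G/η_i`. -/
def etaUp (p : ℕ) (G : Type*) [Group G] : ℕ → Subgroup G
  | 0 => ⊥
  | i + 1 => sSup {N : Subgroup G | N.Normal ∧ ⁅N, (⊤ : Subgroup G)⁆ ≤ pPow p N ⊔ etaUp p G i}

instance etaUp_normal (p : ℕ) (G : Type*) [Group G] (i : ℕ) : (etaUp p G i).Normal := by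
  cases i with
  | zero => show (⊥ : Subgroup G).Normal; infer_instance
  | succ i => exact normal_sSup fun N hN => hN.1

/-- The powerful class of `G`. -/
noncomputable def pwc (p : ℕ) (G : Type*) [Group G] : ℕ := sInf {k | etaUp p G k = ⊤}

/-- Iterated commutator `[N, G, G, ..., G]` with `i` copies of `G`. -/
def itComm {G : Type*} [Group G] (N : Subgroup G) : ℕ → Subgroup G
  | 0 => N
  | i + 1 => ⁅itComm N i, (⊤ : Subgroup G)⁆

/-- `N` is PF-embedded in `G`: it admits a potent filtration. -/
def PFEmbedded {G : Type*} [Group G] (p : ℕ) (N : Subgroup G) : Prop :=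
  ∃ (s : ℕ) (M : ℕ → Subgroup G), M 0 = N ∧ M s = ⊥ ∧
    (∀ i, M (i + 1) ≤ M i) ∧ (∀ i, (M i).Normal) ∧
    (∀ i, ⁅M i, (⊤ : Subgroup G)⁆ ≤ M (i + 1)) ∧
    (∀ i, itComm (M i) (p - 1) ≤ pPow p (M (i + 1)))

/-!
Write `η = η(G)`; powerfulness of `G/η` says `[G, G] ≤ G^p η`, and it suffices to show
`G^p ≤ η`. Put `H = G^p η`. If `H` has exponent `p`, then `η` is central (being powerfully
embedded), and in `G/γ₄` the class-3 identity `[g^p, x] = [g, [g, x]]^(p(p-1)/2) [g, x]^p`,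
trivial for odd `p`, makes `H` central; hence `[H, G] ≤ γ₄`, so `γ₃ = γ₄ = 1` by nilpotency
and `H` is central in `G`, in particular powerfully embedded, so `H ≤ η`. Otherwise induct on
`|G|` through `G/H^p`: the preimage of `η(G/H^p)` contains `H`, hence `H^p`, which makes it
powerfully embedded in `G`, so it lies in `η`.
-/

open scoped commutatorElement
open Subgroup

section Generalities

variable {G G' : Type*} [Group G] [Group G']

theorem pPow_mono (p : ℕ) {N M : Subgroup G} (h : N ≤ M) : pPow p N ≤ pPow p M :=
  closure_mono (Set.image_mono h)

theorem pow_mem_pPow (p : ℕ) {N : Subgroup G} {x : G} (hx : x ∈ N) : x ^ p ∈ pPow p N :=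
  subset_closure ⟨x, hx, rfl⟩

theorem pow_eq_one_of_pPow_eq_bot {p : ℕ} {N : Subgroup G} (h : pPow p N = ⊥) {x : G}
    (hx : x ∈ N) : x ^ p = 1 := by
  simpa [h] using pow_mem_pPow p hx

theorem map_pPow (f : G →* G') (p : ℕ) (N : Subgroup G) :
    (pPow p N).map f = pPow p (N.map f) := by
  simp only [pPow, MonoidHom.map_closure, coe_map, Set.image_image, map_pow]

theorem map_pPow_top {f : G →* G'} (hf : Function.Surjective f) (p : ℕ) :
    (pPow p ⊤).map f = pPow p (⊤ : Subgroup G') := by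
  rw [map_pPow, map_top_of_surjective f hf]

theorem map_commutator_top {f : G →* G'} (hf : Function.Surjective f) :
    map f ⁅(⊤ : Subgroup G), ⊤⁆ = ⁅(⊤ : Subgroup G'), ⊤⁆ := by
  rw [map_commutator, map_top_of_surjective f hf]

theorem map_le_center {f : G →* G'} (hf : Function.Surjective f) {A : Subgroup G}
    (hA : A ≤ center G) : A.map f ≤ center G' := by
  rw [← commutator_top_right_eq_bot_iff_le_center] at hA ⊢
  rw [← map_top_of_surjective f hf, ← map_commutator, hA, Subgroup.map_bot]

theorem commutator_top_le_iff_le_upperCentralSeriesStep {N X : Subgroup G} [X.Normal] :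
    ⁅N, ⊤⁆ ≤ X ↔ N ≤ X.upperCentralSeriesStep :=
  ⟨fun h _ hx y => h (commutator_mem_commutator hx (mem_top y)),
    fun h => commutator_le.2 fun _ hx y _ => h hx y⟩

theorem card_quotient_lt_card [Finite G] {Z : Subgroup G} (hZ : Z ≠ ⊥) :
    Nat.card (G ⧸ Z) < Nat.card G := by
  have hcard := card_eq_card_quotient_mul_card_subgroup Z
  have hZ1 : 1 < Nat.card Z := (one_lt_card_iff_ne_bot Z).2 hZ
  have hQ : 0 < Nat.card (G ⧸ Z) := Nat.card_pos
  nlinarith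

theorem lowerCentralSeries_eq_bot_of_le_succ [Group.IsNilpotent G] {n : ℕ}
    (h : (⊤ : Subgroup G).lowerCentralSeries n ≤ (⊤ : Subgroup G).lowerCentralSeries (n + 1)) :
    (⊤ : Subgroup G).lowerCentralSeries n = ⊥ := by
  obtain ⟨m, hm⟩ := Subgroup.nilpotent_iff_lowerCentralSeries.1 ‹Group.IsNilpotent G›
  have hstable : ∀ k, (⊤ : Subgroup G).lowerCentralSeries n ≤
      (⊤ : Subgroup G).lowerCentralSeries (n + k) := by
    intro k
    induction k with
    | zero => rfl
    | succ k ih => exact h.trans (commutator_mono ih le_rfl)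
  exact le_bot_iff.1
    (hm ▸ (hstable m).trans ((⊤ : Subgroup G).lowerCentralSeries_antitone (by omega)))

theorem commutatorElement_pow_left_of_commute {g x : G} (hg : Commute g ⁅g, ⁅g, x⁆⁆)
    (hx : Commute ⁅g, ⁅g, x⁆⁆ ⁅g, x⁆) (k : ℕ) :
    ⁅g ^ k, x⁆ = ⁅g, ⁅g, x⁆⁆ ^ k.choose 2 * ⁅g, x⁆ ^ k := by
  set c := ⁅g, x⁆
  set d := ⁅g, c⁆
  have hconj : g * c * g⁻¹ = d * c := by simp only [d, commutatorElement_def]; group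
  induction k with
  | zero => simp
  | succ k ih =>
    calc ⁅g ^ (k + 1), x⁆ = g * ⁅g ^ k, x⁆ * g⁻¹ * c := by
          rw [pow_succ', commutatorElement_mul_left_eq_conj_mul]
      _ = g * d ^ k.choose 2 * c ^ k * g⁻¹ * c := by rw [ih]; simp only [mul_assoc]
      _ = d ^ k.choose 2 * (g * c * g⁻¹) ^ k * c := by
          rw [(hg.pow_right _).eq, conj_pow]; simp only [mul_assoc]
      _ = d ^ (k + 1).choose 2 * c ^ (k + 1) := by
          rw [hconj, hx.mul_pow, Nat.choose_succ_succ, Nat.choose_one_right, pow_add, pow_succ]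
          group

theorem Odd.dvd_choose_two {p : ℕ} (hodd : Odd p) : p ∣ p.choose 2 := by
  obtain ⟨m, rfl⟩ := hodd
  exact ⟨m, by rw [Nat.choose_two_right, Nat.add_sub_cancel, mul_comm 2 m, ← mul_assoc,
    Nat.mul_div_cancel _ two_pos]⟩

theorem commutatorElement_pow_eq_one_of_odd {p : ℕ} (hodd : Odd p) {g x : G}
    (hg : Commute g ⁅g, ⁅g, x⁆⁆) (hx : Commute ⁅g, ⁅g, x⁆⁆ ⁅g, x⁆) (hc : ⁅g, x⁆ ^ p = 1)
    (hd : ⁅g, ⁅g, x⁆⁆ ^ p = 1) : ⁅g ^ p, x⁆ = 1 := by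
  obtain ⟨m, hm⟩ := hodd.dvd_choose_two
  rw [commutatorElement_pow_left_of_commute hg hx, hc, hm, pow_mul, hd, one_pow, mul_one]

end Generalities

section Nilpotent

variable {G : Type*} [Group G]

theorem pPow_top_le_center_of_lowerCentralSeries_three_eq_bot {p : ℕ} (hodd : Odd p)
    (h3 : (⊤ : Subgroup G).lowerCentralSeries 3 = ⊥) {H : Subgroup G}
    (hH : ⁅(⊤ : Subgroup G), ⊤⁆ ≤ H) (hHp : pPow p H = ⊥) : pPow p ⊤ ≤ center G := by
  have hcent : (⊤ : Subgroup G).lowerCentralSeries 2 ≤ center G :=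
    commutator_top_right_eq_bot_iff_le_center.1 h3
  rw [pPow, closure_le]
  rintro - ⟨g, -, rfl⟩
  refine mem_center_iff.2 fun x => ?_
  have hc : ⁅g, x⁆ ∈ ⁅(⊤ : Subgroup G), ⊤⁆ := commutator_mem_commutator (mem_top g) (mem_top x)
  have hd : ⁅g, ⁅g, x⁆⁆ ∈ (⊤ : Subgroup G).lowerCentralSeries 2 := by
    rw [Subgroup.lowerCentralSeries_succ, commutator_comm]
    exact commutator_mem_commutator (mem_top g) hc
  have hd' : ⁅g, ⁅g, x⁆⁆ ∈ H := hH (commutator_mem_commutator (mem_top g) (mem_top _))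
  refine (commutatorElement_eq_one_iff_mul_comm.1 ?_).symm
  exact commutatorElement_pow_eq_one_of_odd hodd (mem_center_iff.1 (hcent hd) g)
    (mem_center_iff.1 (hcent hd) _).symm (pow_eq_one_of_pPow_eq_bot hHp (hH hc))
    (pow_eq_one_of_pPow_eq_bot hHp hd')

theorem pPow_top_sup_le_center {p : ℕ} (hodd : Odd p) [Group.IsNilpotent G] {A : Subgroup G}
    (hA : A ≤ center G) (hcomm : ⁅(⊤ : Subgroup G), ⊤⁆ ≤ pPow p ⊤ ⊔ A)
    (hexp : pPow p (pPow p ⊤ ⊔ A) = ⊥) : pPow p ⊤ ⊔ A ≤ center G := by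
  set H := pPow p ⊤ ⊔ A
  set Z := (⊤ : Subgroup G).lowerCentralSeries 3
  let π := QuotientGroup.mk' Z
  have hπ : Function.Surjective π := QuotientGroup.mk'_surjective Z
  have hQ3 : (⊤ : Subgroup (G ⧸ Z)).lowerCentralSeries 3 = ⊥ := by
    rw [← map_top_of_surjective π hπ, ← map_lowerCentralSeries, QuotientGroup.map_mk'_self]
  have hHQ : H.map π = pPow p ⊤ ⊔ A.map π := by rw [Subgroup.map_sup, map_pPow_top hπ]
  have hQ : H.map π ≤ center (G ⧸ Z) := by
    refine hHQ ▸ sup_le (pPow_top_le_center_of_lowerCentralSeries_three_eq_bot hodd hQ3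
      (H := H.map π) ?_ ?_) (map_le_center hπ hA)
    · exact map_commutator_top hπ ▸ map_mono hcomm
    · rw [← map_pPow, hexp, Subgroup.map_bot]
  have hHZ : ⁅H, ⊤⁆ ≤ Z := by
    rw [commutator_top_le_iff_le_upperCentralSeriesStep,
      Subgroup.upperCentralSeriesStep_eq_comap_center]
    exact map_le_iff_le_comap.1 hQ
  -- `γ₃ = ⁅⁅G, G⁆, G⁆ ≤ ⁅H, G⁆ ≤ γ₄` (Mathlib's `lowerCentralSeries n` is `γₙ₊₁`).
  have h3 : (⊤ : Subgroup G).lowerCentralSeries 2 = ⊥ :=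
    lowerCentralSeries_eq_bot_of_le_succ ((commutator_mono hcomm le_rfl).trans hHZ)
  rw [← commutator_top_right_eq_bot_iff_le_center, ← le_bot_iff]
  exact hHZ.trans (h3 ▸ (⊤ : Subgroup G).lowerCentralSeries_antitone (by norm_num))

end Nilpotent

section Eta

variable {G G' : Type*} [Group G] [Group G'] {p : ℕ}

theorem etaUp_one_eq_sSup (p : ℕ) (G : Type*) [Group G] :
    etaUp p G 1 = sSup {N : Subgroup G | N.Normal ∧ ⁅N, ⊤⁆ ≤ pPow p N} := by
  simp only [etaUp, sup_bot_eq]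

theorem le_etaUp_one {N : Subgroup G} (hN : N.Normal) (h : ⁅N, ⊤⁆ ≤ pPow p N) :
    N ≤ etaUp p G 1 :=
  (etaUp_one_eq_sSup p G).symm ▸ le_sSup ⟨hN, h⟩

theorem commutator_etaUp_one_le (p : ℕ) (G : Type*) [Group G] :
    ⁅etaUp p G 1, ⊤⁆ ≤ pPow p (etaUp p G 1) := by
  have := pPow_normal p (etaUp_normal p G 1)
  refine commutator_top_le_iff_le_upperCentralSeriesStep.2 ?_
  conv_lhs => rw [etaUp_one_eq_sSup]
  exact sSup_le fun N hN => commutator_top_le_iff_le_upperCentralSeriesStep.1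
    (hN.2.trans (pPow_mono p (le_etaUp_one hN.1 hN.2)))

theorem map_etaUp_one_le {f : G →* G'} (hf : Function.Surjective f) :
    (etaUp p G 1).map f ≤ etaUp p G' 1 := by
  rw [etaUp_one_eq_sSup, (gc_map_comap f).l_sSup]
  refine iSup₂_le fun N hN => le_etaUp_one (hN.1.map f hf) ?_
  rw [← map_pPow, ← map_top_of_surjective f hf, ← map_commutator]
  exact map_mono hN.2

theorem commutator_top_le_pPow_of_map {f : G →* G'} (hf : Function.Surjective f)
    {N : Subgroup G} (hker : f.ker ≤ pPow p N) (h : ⁅N.map f, ⊤⁆ ≤ pPow p (N.map f)) :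
    ⁅N, ⊤⁆ ≤ pPow p N := by
  rwa [← map_top_of_surjective f hf, ← map_commutator, ← map_pPow, Subgroup.map_le_map_iff,
    sup_eq_left.2 hker] at h

end Eta

theorem pPow_top_sup_etaUp_one_le_center {p : ℕ} (hodd : Odd p) {G : Type*} [Group G]
    [Group.IsNilpotent G] (h : ⁅(⊤ : Subgroup G), ⊤⁆ ≤ pPow p ⊤ ⊔ etaUp p G 1)
    (hexp : pPow p (pPow p ⊤ ⊔ etaUp p G 1) = ⊥) : pPow p ⊤ ⊔ etaUp p G 1 ≤ center G := by
  have hη : etaUp p G 1 ≤ center G := by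
    rw [← commutator_top_right_eq_bot_iff_le_center, ← le_bot_iff, ← hexp]
    exact (commutator_etaUp_one_le p G).trans (pPow_mono p le_sup_right)
  exact pPow_top_sup_le_center hodd hη h hexp

theorem pPow_top_le_etaUp_one {p : ℕ} (hodd : Odd p) {G : Type*} [Group G] [Finite G]
    [Group.IsNilpotent G] (h : ⁅(⊤ : Subgroup G), ⊤⁆ ≤ pPow p ⊤ ⊔ etaUp p G 1) :
    pPow p ⊤ ≤ etaUp p G 1 := by
  induction hn : Nat.card G using Nat.strong_induction_on generalizing G with
  | _ n ih =>
  set H := pPow p ⊤ ⊔ etaUp p G 1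
  have : (pPow p (⊤ : Subgroup G)).Normal := pPow_normal p inferInstance
  have : H.Normal := sup_normal _ _
  suffices ∃ N : Subgroup G, N.Normal ∧ ⁅N, ⊤⁆ ≤ pPow p N ∧ H ≤ N by
    obtain ⟨N, hN, hpe, hHN⟩ := this
    exact le_sup_left.trans (hHN.trans (le_etaUp_one hN hpe))
  by_cases hZ : pPow p H = ⊥
  · have hH :=
      commutator_top_right_eq_bot_iff_le_center.2 (pPow_top_sup_etaUp_one_le_center hodd h hZ)
    exact ⟨H, ‹H.Normal›, hH.le.trans bot_le, le_rfl⟩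
  · set Z := pPow p H
    have : Z.Normal := pPow_normal p ‹H.Normal›
    let π := QuotientGroup.mk' Z
    have hπ : Function.Surjective π := QuotientGroup.mk'_surjective Z
    have hηQ : (etaUp p G 1).map π ≤ etaUp p (G ⧸ Z) 1 := map_etaUp_one_le hπ
    have hQ : ⁅(⊤ : Subgroup (G ⧸ Z)), ⊤⁆ ≤ pPow p ⊤ ⊔ etaUp p (G ⧸ Z) 1 := by
      rw [← map_commutator_top hπ]
      refine (map_mono h).trans ?_
      rw [Subgroup.map_sup, map_pPow_top hπ]
      exact sup_le_sup_left hηQ _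
    have hpowQ := ih _ (hn ▸ card_quotient_lt_card hZ) hQ rfl
    set N := (etaUp p (G ⧸ Z) 1).comap π
    have hHN : H ≤ N := by
      refine map_le_iff_le_comap.1 ?_
      rw [Subgroup.map_sup, map_pPow_top hπ]
      exact sup_le hpowQ hηQ
    refine ⟨N, (etaUp_normal p _ 1).comap π, commutator_top_le_pPow_of_map hπ ?_ ?_, hHN⟩
    · rw [QuotientGroup.ker_mk']
      exact pPow_mono p hHN
    · rw [map_comap_eq_self_of_surjective hπ]
      exact commutator_etaUp_one_le p _

theorem quotient_mul_comm_and_pow_eq_one {p : ℕ} {G : Type*} [Group G] {N : Subgroup G}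
    [N.Normal] (hcomm : ⁅(⊤ : Subgroup G), ⊤⁆ ≤ N) (hpow : pPow p ⊤ ≤ N) :
    (∀ x y : G ⧸ N, x * y = y * x) ∧ ∀ x : G ⧸ N, x ^ p = 1 := by
  refine ⟨fun x y => ?_, fun x => ?_⟩
  · obtain ⟨a, rfl⟩ := QuotientGroup.mk_surjective x
    obtain ⟨b, rfl⟩ := QuotientGroup.mk_surjective y
    exact commutatorElement_eq_one_iff_mul_comm.1 ((QuotientGroup.eq_one_iff _).2
      (hcomm (commutator_mem_commutator (mem_top a) (mem_top b))))
  · obtain ⟨a, rfl⟩ := QuotientGroup.mk_surjective x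
    rw [← QuotientGroup.mk_pow, QuotientGroup.eq_one_iff]
    exact hpow (pow_mem_pPow p (mem_top a))

/-- if `G/η(G)` is powerful, then `G/η(G)` is elementary abelian. -/
theorem quotient_eta_powerful_elementary_abelian {p : ℕ} (hp : p.Prime) (hodd : Odd p)
    {G : Type*} [Group G] [Finite G] (hG : IsPGroup p G)
    (hpow : ⁅(⊤ : Subgroup (G ⧸ etaUp p G 1)), (⊤ : Subgroup (G ⧸ etaUp p G 1))⁆ ≤
      pPow p (⊤ : Subgroup (G ⧸ etaUp p G 1))) :
    (∀ x y : G ⧸ etaUp p G 1, x * y = y * x) ∧ ∀ x : G ⧸ etaUp p G 1, x ^ p = 1 := by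
  have : Fact p.Prime := ⟨hp⟩
  have := hG.isNilpotent
  have hπ := QuotientGroup.mk'_surjective (etaUp p G 1)
  have hcomm : ⁅(⊤ : Subgroup G), ⊤⁆ ≤ pPow p ⊤ ⊔ etaUp p G 1 := by
    rwa [← QuotientGroup.ker_mk' (etaUp p G 1), ← Subgroup.map_le_map_iff, map_commutator_top hπ,
      map_pPow_top hπ]
  have hpowη := pPow_top_le_etaUp_one hodd hcomm
  exact quotient_mul_comm_and_pow_eq_one (hcomm.trans (sup_le hpowη le_rfl)) hpowη
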